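/- There exists an absolute constant C > 0 such that the following holds for all n ≥ 1, all r, ℓ ≥ 1 with 6r ≤ ℓ and 2ℓ ≤ n. Assume the lower-left corner of A_n is the origin, set o_i = (iℓ, 2r) for 1 ≤ i ≤ ⌊n/(2ℓ)⌋, and let 𝒞_i be the discrete ball of radius r centered at o_i. Then for all i ≠ j and every x ∈ 𝒞_i, the simple random walk on ℤ² started at x satisfies P_x(τ_{∂𝒞_j} < τ_{∂A_n}) ≤ C √(r/ℓ). -/

import Mathlib

open MeasureTheory ProbabilityTheory

noncomputable section

attribute [local instance] Classical.propDecidable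

/-- The four unit steps of the simple random walk on `ℤ²`. -/
def stepDir : Fin 4 → ℤ × ℤ := ![(1, 0), (-1, 0), (0, 1), (0, -1)]

/-- Position after `i` steps of the walk started at `x`, where `s` records the
first `k` steps of the walk. -/
def walkPos (x : ℤ × ℤ) {k : ℕ} (s : Fin k → Fin 4) (i : ℕ) : ℤ × ℤ :=
  x + ∑ j : Fin k, if (j : ℕ) < i then stepDir (s j) else 0

/-- The Green function `G_U(x,y)` of simple random walk on `ℤ²` killed at the hitting
time `τ_U` of `U`:  `G_U(x,y) = E_x [∑_{k=0}^{τ_U - 1} 1_{S_k = y}]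
= ∑_k P_x(S_k = y, S_0,…,S_k ∉ U)`. -/
def green (U : Set (ℤ × ℤ)) (x y : ℤ × ℤ) : ℝ :=
  ∑' k : ℕ, (Nat.card {s : Fin k → Fin 4 //
      (∀ i ≤ k, walkPos x s i ∉ U) ∧ walkPos x s k = y} : ℝ) / 4 ^ k

/-- `hitProbBefore x A B = P_x(τ_A < τ_B)` for simple random walk on `ℤ²` started at `x`:
the walk is in `A \ B` at the first time it visits `A ∪ B`. -/
def hitProbBefore (x : ℤ × ℤ) (A B : Set (ℤ × ℤ)) : ℝ :=
  ∑' k : ℕ, (Nat.card {s : Fin k → Fin 4 //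
      (∀ i < k, walkPos x s i ∉ A ∪ B) ∧ walkPos x s k ∈ A ∧ walkPos x s k ∉ B} : ℝ) / 4 ^ k

/-- Adjacency (nearest neighbours) in `ℤ²`. -/
def adj (a b : ℤ × ℤ) : Prop := (a.1 - b.1).natAbs + (a.2 - b.2).natAbs = 1

/-- Inner boundary of a set `A ⊆ ℤ²`. -/
def bdry (A : Set (ℤ × ℤ)) : Set (ℤ × ℤ) := {v | v ∈ A ∧ ∃ u, u ∉ A ∧ adj v u}

/-- The box `A_n = {0,…,n}²` as a finset of `ℤ²`. -/
def boxF (n : ℕ) : Finset (ℤ × ℤ) := Finset.Icc (0, 0) ((n : ℤ), (n : ℤ))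

lemma boxF_nonempty (n : ℕ) : (boxF n).Nonempty :=
  ⟨(0, 0), Finset.mem_Icc.mpr ⟨le_rfl, ⟨Int.natCast_nonneg n, Int.natCast_nonneg n⟩⟩⟩

/-- The discrete (Euclidean) ball of radius `r` centered at `o`, as a subset of `ℤ²`. -/
def ballSet (o : ℤ × ℤ) (r : ℕ) : Set (ℤ × ℤ) :=
  {y | (y.1 - o.1) ^ 2 + (y.2 - o.2) ^ 2 ≤ (r : ℤ) ^ 2}

/-- The discrete (Euclidean) ball of radius `r` centered at `o`, as a finset of `ℤ²`. -/
def ballF (o : ℤ × ℤ) (r : ℕ) : Finset (ℤ × ℤ) :=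
  (Finset.Icc (o - ((r : ℤ), (r : ℤ))) (o + ((r : ℤ), (r : ℤ)))).filter
    (fun y => (y.1 - o.1) ^ 2 + (y.2 - o.2) ^ 2 ≤ (r : ℤ) ^ 2)

/-- Inner boundary of a finset of `ℤ²`, as a finset. -/
def bdryF (A : Finset (ℤ × ℤ)) : Finset (ℤ × ℤ) := A.filter (fun v => ∃ u, u ∉ A ∧ adj v u)

/-!
Let `D = ℓ - 2r` be the horizontal distance between `𝒞_i` and `𝒞_j` and follow the walk for
`N = rD` steps. To hit `∂𝒞_j` before `∂A_n` it must either move `D` horizontally within these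
steps, or survive them without touching `∂A_n`, hence without its height (at most `3r` at the
start) dropping to `0`. The horizontal coordinate is a martingale with variance `1/2` per step,
so by Doob's `L²` inequality the first event has probability at most `N / (2D²) = r / (2D)`.
By the reflection principle the second has probability at most `6r` times the largest point
mass of the height after `N` steps, which is `C(2N, N) / 4^N ≤ 1 / √(N + 1)`. Both bounds are
`O(√(r/ℓ))`.
-/

section Walk

variable (x : ℤ × ℤ) {k : ℕ} (s : Fin k → Fin 4)

@[simp]
lemma walkPos_zero : walkPos x s 0 = x := by
  simp [walkPos]

lemma walkPos_eq_add_walkPos_zero (i : ℕ) : walkPos x s i = x + walkPos 0 s i := by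
  simp [walkPos]

lemma walkPos_succ {i : ℕ} (hi : i < k) :
    walkPos x s (i + 1) = walkPos x s i + stepDir (s ⟨i, hi⟩) := by
  have hsplit : (Finset.univ.filter fun j : Fin k => (j : ℕ) < i + 1) =
      insert ⟨i, hi⟩ (Finset.univ.filter fun j : Fin k => (j : ℕ) < i) := by
    ext j
    simp only [Finset.mem_filter, Finset.mem_insert, Finset.mem_univ, true_and, Fin.ext_iff]
    omega
  simp only [walkPos, ← Finset.sum_filter, hsplit]
  rw [Finset.sum_insert (by simp)]
  abel

lemma walkPos_of_le {i : ℕ} (h : k ≤ i) : walkPos x s i = walkPos x s k := by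
  simp only [walkPos]
  congr 1
  refine Finset.sum_congr rfl fun j _ => ?_
  rw [if_pos (by omega), if_pos j.isLt]

lemma walkPos_castLE {K : ℕ} (h : k ≤ K) (s : Fin K → Fin 4) {i : ℕ} (hi : i ≤ k) :
    walkPos x (fun j => s (Fin.castLE h j)) i = walkPos x s i := by
  induction i with
  | zero => simp
  | succ i ih =>
    rw [walkPos_succ x _ hi, walkPos_succ x s (by omega), ih (by omega)]
    rfl

lemma walkPos_snoc (a : Fin 4) {i : ℕ} (hi : i ≤ k) :
    walkPos x (Fin.snoc s a : Fin (k + 1) → Fin 4) i = walkPos x s i := by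
  conv_rhs => rw [← Fin.snoc_comp_castSucc (f := s) (a := a)]
  exact (walkPos_castLE x (Nat.le_succ k) _ hi).symm

lemma walkPos_snoc_last (a : Fin 4) :
    walkPos x (Fin.snoc s a : Fin (k + 1) → Fin 4) (k + 1) = walkPos x s k + stepDir a := by
  rw [walkPos_succ x _ k.lt_succ_self, walkPos_snoc x s a le_rfl]
  exact congrArg (fun j => _ + stepDir j) (Fin.snoc_last (α := fun _ => Fin 4) a s)

lemma adj_add_stepDir (v : ℤ × ℤ) (a : Fin 4) : adj v (v + stepDir a) := by
  fin_cases a <;> simp [adj, stepDir]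

lemma add_stepDir_mem_of_notMem_bdry {A : Set (ℤ × ℤ)} {v : ℤ × ℤ} (hv : v ∈ A)
    (hnb : v ∉ bdry A) (a : Fin 4) : v + stepDir a ∈ A := by
  by_contra hout
  exact hnb ⟨hv, _, hout, adj_add_stepDir v a⟩

lemma walkPos_mem_of_forall_notMem_bdry {A : Set (ℤ × ℤ)} (hx : x ∈ A) {i : ℕ}
    (h : ∀ i' < i, walkPos x s i' ∉ bdry A) : walkPos x s i ∈ A := by
  induction i with
  | zero => simpa
  | succ i ih =>
    have hi : walkPos x s i ∈ A := ih fun i' hi' => h i' (by omega)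
    rcases lt_or_ge i k with hik | hik
    · rw [walkPos_succ x s hik]
      exact add_stepDir_mem_of_notMem_bdry hi (h i (by omega)) _
    · rwa [walkPos_of_le x s (by omega : k ≤ i + 1), ← walkPos_of_le x s hik]

end Walk

section Tuples

variable {α : Type*} [Fintype α]

lemma sum_pi_fin_succ {M : Type*} [AddCommMonoid M] {N : ℕ} (f : (Fin (N + 1) → α) → M) :
    ∑ s, f s = ∑ s : Fin N → α, ∑ a : α, f (Fin.snoc s a) := by
  rw [← (Fin.snocEquiv fun _ => α).sum_comp, Fintype.sum_prod_type, Finset.sum_comm]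
  rfl

lemma card_filter_castLE {k K : ℕ} (h : k ≤ K) (p : (Fin k → α) → Prop) :
    (Finset.univ.filter fun s : Fin K → α => p fun j => s (Fin.castLE h j)).card =
      (Finset.univ.filter p).card * Fintype.card α ^ (K - k) := by
  induction K with
  | zero =>
    obtain rfl : k = 0 := by omega
    simp
  | succ K ih =>
    rcases eq_or_lt_of_le h with rfl | hlt
    · simp
    have hkK : k ≤ K := by omega
    have hprefix (s : Fin K → α) (a : α) :
        (fun j => (Fin.snoc s a : Fin (K + 1) → α) (Fin.castLE h j)) =
          fun j => s (Fin.castLE hkK j) := by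
      funext j
      exact Fin.snoc_castSucc (α := fun _ => α) (i := Fin.castLE hkK j) ..
    rw [Finset.card_filter, sum_pi_fin_succ]
    simp only [hprefix, Finset.sum_const, Finset.card_univ, smul_eq_mul]
    rw [← Finset.mul_sum, ← Finset.card_filter, ih hkK, Nat.succ_sub hkK, pow_succ]
    ring

end Tuples

def chooseInt (n : ℕ) (u : ℤ) : ℕ := if u < 0 then 0 else n.choose u.toNat

lemma chooseInt_succ (n : ℕ) (u : ℤ) :
    chooseInt (n + 1) u = chooseInt n (u - 1) + chooseInt n u := by
  unfold chooseInt
  rcases lt_trichotomy u 0 with h | rfl | h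
  · simp [h, show u - 1 < 0 by omega]
  · simp
  · obtain ⟨v, rfl⟩ : ∃ v : ℕ, u = v + 1 := ⟨(u - 1).toNat, by omega⟩
    simp only [show ¬((v : ℤ) + 1 < 0) by omega, show ¬((v : ℤ) + 1 - 1 < 0) by omega,
      if_false, show ((v : ℤ) + 1).toNat = v + 1 by omega,
      show ((v : ℤ) + 1 - 1).toNat = v by omega,
      Nat.choose_succ_succ']

lemma chooseInt_add_two (n : ℕ) (u : ℤ) :
    chooseInt (n + 2) (u + 1) = 2 * chooseInt n u + chooseInt n (u - 1) + chooseInt n (u + 1) := by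
  rw [chooseInt_succ, chooseInt_succ, chooseInt_succ, add_sub_cancel_right]
  ring

lemma chooseInt_two_mul_le_centralBinom (N : ℕ) (u : ℤ) :
    chooseInt (2 * N) u ≤ N.centralBinom := by
  unfold chooseInt
  split_ifs
  exacts [Nat.zero_le _, Nat.choose_le_centralBinom _ _]

lemma centralBinom_sq_mul_succ_le (n : ℕ) : n.centralBinom ^ 2 * (n + 1) ≤ (4 ^ n) ^ 2 := by
  induction n with
  | zero => simp
  | succ n ih =>
    have hrec := Nat.succ_mul_centralBinom_succ n
    have hsq : (n + 1) ^ 2 * ((n + 1).centralBinom ^ 2 * (n + 2)) =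
        (2 * (2 * n + 1) * n.centralBinom) ^ 2 * (n + 2) := by
      rw [← hrec]
      ring
    refine Nat.le_of_mul_le_mul_left ?_ (by positivity : 0 < (n + 1) ^ 2)
    rw [hsq]
    calc (2 * (2 * n + 1) * n.centralBinom) ^ 2 * (n + 2)
        ≤ 16 * (n + 1) ^ 2 * (n.centralBinom ^ 2 * (n + 1)) := by
          nlinarith [Nat.zero_le (n.centralBinom ^ 2)]
      _ ≤ (n + 1) ^ 2 * ((4 ^ n) ^ 2 * 16) := by nlinarith
      _ = (n + 1) ^ 2 * (4 ^ (n + 1)) ^ 2 := by ring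

lemma centralBinom_mul_sqrt_le (n : ℕ) : (n.centralBinom : ℝ) * Real.sqrt (n + 1) ≤ 4 ^ n := by
  calc (n.centralBinom : ℝ) * Real.sqrt (n + 1)
      = Real.sqrt (n.centralBinom ^ 2 * (n + 1)) := by
        rw [Real.sqrt_mul (by positivity), Real.sqrt_sq (by positivity)]
    _ ≤ Real.sqrt ((4 ^ n) ^ 2) :=
        Real.sqrt_le_sqrt (by exact_mod_cast centralBinom_sq_mul_succ_le n)
    _ = 4 ^ n := Real.sqrt_sq (by positivity)

section VerticalDisplacement

def vertDisp {N : ℕ} (s : Fin N → Fin 4) : ℤ := ∑ j, (stepDir (s j)).2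

lemma snd_walkPos_length (x : ℤ × ℤ) {N : ℕ} (s : Fin N → Fin 4) :
    (walkPos x s N).2 = x.2 + vertDisp s := by
  simp [walkPos, vertDisp, Prod.snd_sum]

lemma vertDisp_snoc {N : ℕ} (s : Fin N → Fin 4) (a : Fin 4) :
    vertDisp (Fin.snoc s a : Fin (N + 1) → Fin 4) = vertDisp s + (stepDir a).2 := by
  simp [vertDisp, Fin.sum_univ_castSucc]

lemma card_vertDisp_succ (N : ℕ) (m : ℤ) :
    (Finset.univ.filter fun s : Fin (N + 1) → Fin 4 => vertDisp s = m).card =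
      2 * (Finset.univ.filter fun s : Fin N → Fin 4 => vertDisp s = m).card +
        (Finset.univ.filter fun s : Fin N → Fin 4 => vertDisp s = m - 1).card +
        (Finset.univ.filter fun s : Fin N → Fin 4 => vertDisp s = m + 1).card := by
  simp only [Finset.card_filter]
  rw [sum_pi_fin_succ, Finset.mul_sum, ← Finset.sum_add_distrib, ← Finset.sum_add_distrib]
  refine Finset.sum_congr rfl fun s _ => ?_
  simp only [Fin.sum_univ_four, vertDisp_snoc]
  simp only [stepDir, Matrix.cons_val, add_zero, ← eq_sub_iff_add_eq, sub_neg_eq_add]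
  ring

lemma card_vertDisp_eq_chooseInt (N : ℕ) (m : ℤ) :
    (Finset.univ.filter fun s : Fin N → Fin 4 => vertDisp s = m).card =
      chooseInt (2 * N) (N + m) := by
  induction N generalizing m with
  | zero =>
    rcases lt_trichotomy m 0 with h | rfl | h
    · simp [vertDisp, chooseInt, h, h.ne']
    · simp [vertDisp, chooseInt]
    · simp [vertDisp, chooseInt, h.ne, h.not_gt, Nat.choose_eq_zero_of_lt, h]
  | succ N ih =>
    rw [card_vertDisp_succ, ih, ih, ih, show 2 * (N + 1) = 2 * N + 2 by ring]
    convert (chooseInt_add_two (2 * N) (N + m)).symm using 2 <;> push_cast <;> ring_nf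

lemma card_vertDisp_le_centralBinom (N : ℕ) (m : ℤ) :
    (Finset.univ.filter fun s : Fin N → Fin 4 => vertDisp s = m).card ≤ N.centralBinom :=
  card_vertDisp_eq_chooseInt N m ▸ chooseInt_two_mul_le_centralBinom N _

end VerticalDisplacement

section Reflection

/-- Swaps the two vertical steps. -/
def flipStep : Fin 4 → Fin 4 := ![0, 1, 3, 2]

lemma stepDir_flipStep (a : Fin 4) :
    stepDir (flipStep a) = ((stepDir a).1, -(stepDir a).2) := by
  fin_cases a <;> rfl

lemma flipStep_flipStep (a : Fin 4) : flipStep (flipStep a) = a := by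
  fin_cases a <;> rfl

lemma abs_snd_stepDir_le_one (a : Fin 4) : |(stepDir a).2| ≤ 1 := by
  fin_cases a <;> simp [stepDir]

lemma vertDisp_flipStep {N : ℕ} (s : Fin N → Fin 4) :
    vertDisp (fun j => flipStep (s j)) = -vertDisp s := by
  simp [vertDisp, stepDir_flipStep]

variable (x : ℤ × ℤ) {N : ℕ}

def HitsZeroBy (s : Fin N → Fin 4) (i : ℕ) : Prop := ∃ t ≤ i, (walkPos x s t).2 = 0

lemma hitsZeroBy_succ_iff (s : Fin N → Fin 4) (i : ℕ) :
    HitsZeroBy x s (i + 1) ↔ HitsZeroBy x s i ∨ (walkPos x s (i + 1)).2 = 0 := by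
  simp only [HitsZeroBy, Nat.le_succ_iff, or_and_right, exists_or, exists_eq_left]

lemma hitsZeroBy_of_snd_walkPos_nonpos (hx : 1 ≤ x.2) (s : Fin N → Fin 4) {i : ℕ}
    (h : (walkPos x s i).2 ≤ 0) : HitsZeroBy x s i := by
  induction i with
  | zero => rw [walkPos_zero] at h; omega
  | succ i ih =>
    rw [hitsZeroBy_succ_iff]
    rcases eq_or_lt_of_le h with h0 | hneg
    · exact Or.inr h0
    refine Or.inl (ih ?_)
    rcases lt_or_ge i N with hi | hi
    · have := abs_le.mp (abs_snd_stepDir_le_one (s ⟨i, hi⟩))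
      rw [walkPos_succ x s hi, Prod.snd_add] at hneg
      omega
    · rw [walkPos_of_le x s hi, ← walkPos_of_le x s (by omega : N ≤ i + 1)]
      exact h

def reflectAtZero (s : Fin N → Fin 4) : Fin N → Fin 4 :=
  fun j => if HitsZeroBy x s j then flipStep (s j) else s j

lemma snd_walkPos_reflectAtZero (s : Fin N → Fin 4) {i : ℕ} (hi : i ≤ N) :
    (walkPos x (reflectAtZero x s) i).2 =
      if HitsZeroBy x s i then -(walkPos x s i).2 else (walkPos x s i).2 := by
  induction i with
  | zero =>
    simp only [walkPos_zero, HitsZeroBy, Nat.le_zero, exists_eq_left]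
    split_ifs with h <;> omega
  | succ i ih =>
    have hiN : i < N := by omega
    rw [walkPos_succ x _ hiN, walkPos_succ x s hiN, Prod.snd_add, Prod.snd_add, ih hiN.le,
      hitsZeroBy_succ_iff]
    simp only [reflectAtZero]
    by_cases hit : HitsZeroBy x s i
    · simp only [hit, if_true, stepDir_flipStep, true_or, neg_add_rev]
      ring
    · simp only [hit, if_false, false_or, walkPos_succ x s hiN, Prod.snd_add]
      split_ifs <;> omega

lemma hitsZeroBy_reflectAtZero (s : Fin N → Fin 4) {i : ℕ} (hi : i ≤ N) :
    HitsZeroBy x (reflectAtZero x s) i ↔ HitsZeroBy x s i := by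
  refine exists_congr fun t => and_congr_right fun ht => ?_
  rw [snd_walkPos_reflectAtZero x s (ht.trans hi)]
  split_ifs <;> simp

lemma reflectAtZero_reflectAtZero (s : Fin N → Fin 4) :
    reflectAtZero x (reflectAtZero x s) = s := by
  funext j
  simp only [reflectAtZero, hitsZeroBy_reflectAtZero x s j.isLt.le]
  split_ifs <;> simp [flipStep_flipStep]

lemma forall_one_le_snd_walkPos_iff (hx : 1 ≤ x.2) (s : Fin N → Fin 4) :
    (∀ i ≤ N, 1 ≤ (walkPos x s i).2) ↔ ¬HitsZeroBy x s N := by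
  constructor
  · rintro hpos ⟨t, ht, h0⟩
    have := hpos t ht
    omega
  · intro hmiss i hi
    by_contra hneg
    exact hmiss <| (hitsZeroBy_of_snd_walkPos_nonpos x hx s (by omega : (walkPos x s i).2 ≤ 0)).imp
      fun t ht => ⟨ht.1.trans hi, ht.2⟩

/-- Reflection principle: reflecting after the first visit to height `0` is a bijection between
the paths that visit `0` and end at height `≥ 1` and those that end at height `≤ -1`. -/
lemma card_stays_positive_add_card_end_neg (hx : 1 ≤ x.2) :
    (Finset.univ.filter fun s : Fin N → Fin 4 => ∀ i ≤ N, 1 ≤ (walkPos x s i).2).card +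
      (Finset.univ.filter fun s : Fin N → Fin 4 => (walkPos x s N).2 ≤ -1).card =
    (Finset.univ.filter fun s : Fin N → Fin 4 => 1 ≤ (walkPos x s N).2).card := by
  rw [← Finset.card_filter_add_card_filter_not (p := fun s => HitsZeroBy x s N)
      (s := Finset.univ.filter fun s : Fin N → Fin 4 => 1 ≤ (walkPos x s N).2),
    Finset.filter_filter, Finset.filter_filter, add_comm]
  congr 1
  · apply Finset.card_nbij' (reflectAtZero x) (reflectAtZero x)
    · intro s hs
      simp only [Finset.coe_filter, Finset.mem_univ, true_and, Set.mem_ofPred_eq] at hs ⊢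
      have hit := hitsZeroBy_of_snd_walkPos_nonpos x hx s (by omega : (walkPos x s N).2 ≤ 0)
      rw [snd_walkPos_reflectAtZero x s le_rfl, if_pos hit, hitsZeroBy_reflectAtZero x s le_rfl]
      exact ⟨by omega, hit⟩
    · intro s hs
      simp only [Finset.coe_filter, Finset.mem_univ, true_and, Set.mem_ofPred_eq] at hs ⊢
      rw [snd_walkPos_reflectAtZero x s le_rfl, if_pos hs.2]
      omega
    · exact fun s _ => reflectAtZero_reflectAtZero x s
    · exact fun s _ => reflectAtZero_reflectAtZero x s
  · congr 1
    ext s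
    simp only [Finset.mem_filter, Finset.mem_univ, true_and, ← forall_one_le_snd_walkPos_iff x hx]
    exact ⟨fun h => ⟨h N le_rfl, h⟩, And.right⟩

lemma card_stays_positive_le (hx : 1 ≤ x.2) :
    (Finset.univ.filter fun s : Fin N → Fin 4 => ∀ i ≤ N, 1 ≤ (walkPos x s i).2).card ≤
      2 * x.2.toNat * N.centralBinom := by
  have hsymm : (Finset.univ.filter fun s : Fin N → Fin 4 => (walkPos x s N).2 ≤ -1).card =
      (Finset.univ.filter fun s : Fin N → Fin 4 => ¬vertDisp s ≤ x.2).card := by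
    refine Finset.card_nbij' (fun s j => flipStep (s j)) (fun s j => flipStep (s j))
      ?_ ?_ ?_ ?_ <;> intro s _ <;>
      simp_all [snd_walkPos_length, vertDisp_flipStep, flipStep_flipStep] <;> omega
  have hsplit : (Finset.univ.filter fun s : Fin N → Fin 4 => 1 ≤ (walkPos x s N).2).card =
      (Finset.univ.filter fun s : Fin N → Fin 4 => vertDisp s ∈ Finset.Icc (1 - x.2) x.2).card +
      (Finset.univ.filter fun s : Fin N → Fin 4 => ¬vertDisp s ≤ x.2).card := by
    rw [← Finset.card_union_of_disjoint <| Finset.disjoint_filter.mpr fun s _ h => by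
      simp only [Finset.mem_Icc] at h
      omega]
    congr 1
    ext s
    simp only [Finset.mem_filter, Finset.mem_union, Finset.mem_univ, true_and, Finset.mem_Icc,
      snd_walkPos_length]
    omega
  have hcount := card_stays_positive_add_card_end_neg x hx (N := N)
  calc _ = (Finset.univ.filter fun s : Fin N → Fin 4 =>
          vertDisp s ∈ Finset.Icc (1 - x.2) x.2).card := by omega
    _ = ∑ m ∈ Finset.Icc (1 - x.2) x.2,
          (Finset.univ.filter fun s : Fin N → Fin 4 => vertDisp s = m).card :=
      (Finset.sum_card_fiberwise_eq_card_filter _ _ _).symm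
    _ ≤ ∑ _m ∈ Finset.Icc (1 - x.2) x.2, N.centralBinom :=
      Finset.sum_le_sum fun m _ => card_vertDisp_le_centralBinom N m
    _ = 2 * x.2.toNat * N.centralBinom := by
      rw [Finset.sum_const, Int.card_Icc, smul_eq_mul]
      congr 1
      omega

end Reflection

section MaximalInequality

variable (D : ℕ) {N : ℕ}

def exitTime (s : Fin N → Fin 4) : ℕ :=
  Nat.find (⟨N, Or.inr rfl⟩ : ∃ i, (D : ℤ) ≤ |(walkPos 0 s i).1| ∨ i = N)

def stoppedDisp (s : Fin N → Fin 4) : ℤ := (walkPos 0 s (exitTime D s)).1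

lemma exitTime_le (s : Fin N → Fin 4) : exitTime D s ≤ N :=
  Nat.find_le (Or.inr rfl)

lemma exitTime_spec (s : Fin N → Fin 4) :
    (D : ℤ) ≤ |(walkPos 0 s (exitTime D s)).1| ∨ exitTime D s = N :=
  Nat.find_spec (⟨N, Or.inr rfl⟩ : ∃ i, (D : ℤ) ≤ |(walkPos 0 s i).1| ∨ i = N)

lemma exitTime_of_not_reached (s : Fin N → Fin 4) (h : ∀ i ≤ N, |(walkPos 0 s i).1| < D) :
    exitTime D s = N :=
  (exitTime_spec D s).resolve_left (not_le.mpr (h _ (exitTime_le D s)))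

lemma le_abs_stoppedDisp (s : Fin N → Fin 4) (h : ∃ i ≤ N, (D : ℤ) ≤ |(walkPos 0 s i).1|) :
    (D : ℤ) ≤ |stoppedDisp D s| := by
  obtain ⟨i, hiN, hi⟩ := h
  rcases exitTime_spec D s with h' | h'
  · exact h'
  · have : exitTime D s ≤ i := Nat.find_le (Or.inl hi)
    rw [stoppedDisp, show exitTime D s = i by omega]
    exact hi

lemma stoppedDisp_snoc_of_reached (s : Fin N → Fin 4) (a : Fin 4)
    (h : ∃ i ≤ N, (D : ℤ) ≤ |(walkPos 0 s i).1|) :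
    stoppedDisp D (Fin.snoc s a : Fin (N + 1) → Fin 4) = stoppedDisp D s := by
  have hτ := exitTime_le D s
  have hreach := le_abs_stoppedDisp D s h
  have hfind : exitTime D (Fin.snoc s a : Fin (N + 1) → Fin 4) = exitTime D s := by
    rw [exitTime, Nat.find_eq_iff]
    refine ⟨Or.inl (by rwa [walkPos_snoc 0 s a hτ]), fun i hi => not_or.mpr ⟨?_, by omega⟩⟩
    rw [walkPos_snoc 0 s a (by omega)]
    exact fun hi' => Nat.find_min _ hi (Or.inl hi')
  rw [stoppedDisp, hfind, walkPos_snoc 0 s a hτ, stoppedDisp]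

lemma stoppedDisp_snoc_of_not_reached (s : Fin N → Fin 4) (a : Fin 4)
    (h : ∀ i ≤ N, |(walkPos 0 s i).1| < D) :
    stoppedDisp D (Fin.snoc s a : Fin (N + 1) → Fin 4) = stoppedDisp D s + (stepDir a).1 := by
  have hfind : exitTime D (Fin.snoc s a : Fin (N + 1) → Fin 4) = N + 1 := by
    rw [exitTime, Nat.find_eq_iff]
    refine ⟨Or.inr rfl, fun i hi => not_or.mpr ⟨?_, by omega⟩⟩
    rw [walkPos_snoc 0 s a (by omega), not_le]
    exact h i (by omega)
  rw [stoppedDisp, hfind, walkPos_snoc_last, stoppedDisp, exitTime_of_not_reached D s h,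
    Prod.fst_add]

/-- Optional stopping for the martingale `X_t² - t / 2`, where `X` is the horizontal
displacement. -/
lemma two_mul_sum_sq_stoppedDisp_le :
    2 * ∑ s : Fin N → Fin 4, stoppedDisp D s ^ 2 ≤ N * 4 ^ N := by
  induction N with
  | zero =>
    have (s : Fin 0 → Fin 4) : stoppedDisp D s = 0 := by
      simp [stoppedDisp, Nat.le_zero.mp (exitTime_le D s)]
    simp [this]
  | succ N ih =>
    have hstep (s : Fin N → Fin 4) :
        ∑ a : Fin 4, stoppedDisp D (Fin.snoc s a : Fin (N + 1) → Fin 4) ^ 2 ≤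
          4 * stoppedDisp D s ^ 2 + 2 := by
      by_cases h : ∃ i ≤ N, (D : ℤ) ≤ |(walkPos 0 s i).1|
      · simp only [stoppedDisp_snoc_of_reached D s _ h, Finset.sum_const, Finset.card_univ,
          Fintype.card_fin, nsmul_eq_mul]
        push_cast
        linarith
      · simp only [not_exists, not_and, not_le] at h
        simp only [stoppedDisp_snoc_of_not_reached D s _ h, Fin.sum_univ_four, stepDir,
          Matrix.cons_val]
        linarith
    calc 2 * ∑ s : Fin (N + 1) → Fin 4, stoppedDisp D s ^ 2
        = 2 * ∑ s : Fin N → Fin 4, ∑ a : Fin 4,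
            stoppedDisp D (Fin.snoc s a : Fin (N + 1) → Fin 4) ^ 2 := by
          rw [sum_pi_fin_succ]
      _ ≤ 2 * ∑ s : Fin N → Fin 4, (4 * stoppedDisp D s ^ 2 + 2) := by
          gcongr with s
          exact hstep s
      _ = 4 * (2 * ∑ s : Fin N → Fin 4, stoppedDisp D s ^ 2) + 4 * 4 ^ N := by
          simp only [Finset.sum_add_distrib, ← Finset.mul_sum, Finset.sum_const, Finset.card_univ,
            Fintype.card_pi, Fintype.card_fin, Finset.prod_const, Int.nsmul_eq_mul, Nat.cast_pow,
            Nat.cast_ofNat]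
          ring
      _ ≤ ((N + 1 : ℕ) : ℤ) * 4 ^ (N + 1) := by
          push_cast
          rw [pow_succ]
          linarith

lemma two_mul_sq_mul_card_reach_le :
    2 * D ^ 2 * (Finset.univ.filter fun s : Fin N → Fin 4 =>
      ∃ i ≤ N, (D : ℤ) ≤ |(walkPos 0 s i).1|).card ≤ N * 4 ^ N := by
  have hsum : (D : ℤ) ^ 2 * (Finset.univ.filter fun s : Fin N → Fin 4 =>
      ∃ i ≤ N, (D : ℤ) ≤ |(walkPos 0 s i).1|).card ≤ ∑ s : Fin N → Fin 4, stoppedDisp D s ^ 2 := by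
    rw [mul_comm, ← nsmul_eq_mul, ← Finset.sum_const]
    refine (Finset.sum_le_sum fun s hs => ?_).trans
      (Finset.sum_le_sum_of_subset_of_nonneg (Finset.filter_subset _ _) fun _ _ _ => sq_nonneg _)
    rw [← sq_abs (stoppedDisp D s)]
    exact pow_le_pow_left₀ (Nat.cast_nonneg _)
      (le_abs_stoppedDisp D s (Finset.mem_filter.mp hs).2) 2
  have := two_mul_sum_sq_stoppedDisp_le D (N := N)
  exact Int.ofNat_le.mp (by push_cast; linarith)

end MaximalInequality

section FirstHit

variable (x : ℤ × ℤ) (A B : Set (ℤ × ℤ))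

def FirstHitAt {K : ℕ} (s : Fin K → Fin 4) (k : ℕ) : Prop :=
  (∀ i < k, walkPos x s i ∉ A ∪ B) ∧ walkPos x s k ∈ A ∧ walkPos x s k ∉ B

lemma hitProbBefore_eq_tsum : hitProbBefore x A B =
    ∑' k, ((Finset.univ.filter fun s : Fin k → Fin 4 => FirstHitAt x A B s k).card : ℝ) /
      4 ^ k := by
  refine tsum_congr fun k => ?_
  rw [Nat.card_eq_fintype_card, Fintype.card_subtype]
  congr 3
  ext s
  simp [FirstHitAt]

lemma firstHitAt_castLE_iff {k K : ℕ} (h : k ≤ K) (s : Fin K → Fin 4) :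
    FirstHitAt x A B (fun j => s (Fin.castLE h j)) k ↔ FirstHitAt x A B s k := by
  simp only [FirstHitAt, walkPos_castLE x h s le_rfl]
  exact and_congr_left' <| forall₂_congr fun i hi => by rw [walkPos_castLE x h s hi.le]

lemma FirstHitAt.eq {K : ℕ} {s : Fin K → Fin 4} {k k' : ℕ} (h : FirstHitAt x A B s k)
    (h' : FirstHitAt x A B s k') : k = k' := by
  by_contra hne
  rcases Nat.lt_or_gt_of_ne hne with hlt | hlt
  · exact h'.1 k hlt (Or.inl h.2.1)
  · exact h.1 k' hlt (Or.inl h'.2.1)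

lemma card_firstHitAt_extend {k K : ℕ} (h : k ≤ K) :
    (Finset.univ.filter fun s : Fin K → Fin 4 => FirstHitAt x A B s k).card =
      (Finset.univ.filter fun s : Fin k → Fin 4 => FirstHitAt x A B s k).card * 4 ^ (K - k) := by
  have hcyl := card_filter_castLE h fun t : Fin k → Fin 4 => FirstHitAt x A B t k
  simpa only [firstHitAt_castLE_iff, Fintype.card_fin] using hcyl

/-- The events `FirstHitAt · k`, `k < K`, are disjoint cylinders over the first `k` steps, so
among the paths of length `K ≥ N` their union has at most `#P · 4 ^ (K - N)` elements. -/
lemma hitProbBefore_le_of_firstHitAt (N : ℕ) (P : (Fin N → Fin 4) → Prop)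
    (hP : ∀ K (hK : N ≤ K) (s : Fin K → Fin 4) k,
      FirstHitAt x A B s k → P fun j => s (Fin.castLE hK j)) :
    hitProbBefore x A B ≤ (Finset.univ.filter P).card / 4 ^ N := by
  rw [hitProbBefore_eq_tsum]
  refine Real.tsum_le_of_sum_range_le (fun k => by positivity) fun n => ?_
  set K := n + N
  set E : ℕ → Finset (Fin K → Fin 4) := fun k =>
    Finset.univ.filter fun s => FirstHitAt x A B s k
  have hcount : (∑ k ∈ Finset.range K, (E k).card) ≤
      (Finset.univ.filter P).card * 4 ^ (K - N) := by
    have hcyl := card_filter_castLE (show N ≤ K by omega) P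
    rw [Fintype.card_fin] at hcyl
    rw [← Finset.card_biUnion fun k _ k' _ hne => Finset.disjoint_filter.mpr
      fun s _ hk hk' => hne (hk.eq x A B hk'), ← hcyl]
    refine Finset.card_le_card fun s hs => ?_
    obtain ⟨k, -, hk⟩ := Finset.mem_biUnion.mp hs
    exact Finset.mem_filter.mpr ⟨Finset.mem_univ _, hP K (by omega) s k (Finset.mem_filter.mp hk).2⟩
  calc ∑ k ∈ Finset.range n,
        ((Finset.univ.filter fun s : Fin k → Fin 4 => FirstHitAt x A B s k).card : ℝ) / 4 ^ k
      ≤ ∑ k ∈ Finset.range K,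
        ((Finset.univ.filter fun s : Fin k → Fin 4 => FirstHitAt x A B s k).card : ℝ) / 4 ^ k :=
        Finset.sum_le_sum_of_subset_of_nonneg (Finset.range_mono (by omega))
          fun _ _ _ => by positivity
    _ = (∑ k ∈ Finset.range K, (E k).card : ℕ) / 4 ^ K := by
        rw [Nat.cast_sum, Finset.sum_div]
        refine Finset.sum_congr rfl fun k hk => ?_
        rw [card_firstHitAt_extend x A B (Finset.mem_range.mp hk).le]
        push_cast
        rw [pow_sub₀ _ four_ne_zero (Finset.mem_range.mp hk).le]
        field_simp
    _ ≤ ((Finset.univ.filter P).card * 4 ^ (K - N) : ℕ) / 4 ^ K := by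
        gcongr
    _ = (Finset.univ.filter P).card / 4 ^ N := by
        push_cast
        rw [pow_sub₀ _ four_ne_zero (by omega)]
        field_simp

end FirstHit

lemma hitProbBefore_le_card_reach_add_card_stay (x : ℤ × ℤ) (A B : Set (ℤ × ℤ)) (D N : ℕ)
    (hA : ∀ v ∈ A, (D : ℤ) ≤ |v.1 - x.1|)
    (hB : ∀ K (s : Fin K → Fin 4) i, (∀ i' ≤ i, walkPos x s i' ∉ B) → 1 ≤ (walkPos x s i).2) :
    hitProbBefore x A B ≤
      ((Finset.univ.filter fun s : Fin N → Fin 4 => ∃ i ≤ N, (D : ℤ) ≤ |(walkPos 0 s i).1|).card +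
        (Finset.univ.filter fun s : Fin N → Fin 4 => ∀ i ≤ N, 1 ≤ (walkPos x s i).2).card : ℝ) /
        4 ^ N := by
  refine (hitProbBefore_le_of_firstHitAt x A B N
    (fun s => (∃ i ≤ N, (D : ℤ) ≤ |(walkPos 0 s i).1|) ∨ ∀ i ≤ N, 1 ≤ (walkPos x s i).2)
    fun K hK s k hk => ?_).trans ?_
  · rcases le_or_gt k N with hkN | hNk
    · refine Or.inl ⟨k, hkN, ?_⟩
      rw [walkPos_castLE 0 hK s hkN]
      simpa [walkPos_eq_add_walkPos_zero x s k] using hA _ hk.2.1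
    · refine Or.inr fun i hi => ?_
      rw [walkPos_castLE x hK s hi]
      exact hB K s i fun i' hi' hB' => hk.1 i' (by omega) (Or.inr hB')
  · gcongr
    exact_mod_cast (Finset.card_le_card fun s hs => by
      simpa only [Finset.mem_union, Finset.mem_filter, Finset.mem_univ, true_and] using hs).trans
      (Finset.card_union_le _ _)

lemma card_reach_div_le {D : ℕ} (N : ℕ) (hD : 0 < D) :
    ((Finset.univ.filter fun s : Fin N → Fin 4 =>
      ∃ i ≤ N, (D : ℤ) ≤ |(walkPos 0 s i).1|).card : ℝ) / 4 ^ N ≤ N / (2 * D ^ 2) := by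
  rw [div_le_div_iff₀ (by positivity) (by positivity), mul_comm]
  exact_mod_cast two_mul_sq_mul_card_reach_le D

lemma card_stays_positive_div_le {x : ℤ × ℤ} (N : ℕ) (hx : 1 ≤ x.2) :
    ((Finset.univ.filter fun s : Fin N → Fin 4 => ∀ i ≤ N, 1 ≤ (walkPos x s i).2).card : ℝ) /
      4 ^ N ≤ 2 * x.2 / Real.sqrt (N + 1) := by
  have hcard : ((Finset.univ.filter fun s : Fin N → Fin 4 =>
      ∀ i ≤ N, 1 ≤ (walkPos x s i).2).card : ℝ) ≤ 2 * x.2 * N.centralBinom := by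
    have h := card_stays_positive_le x hx (N := N)
    rw [← Int.toNat_of_nonneg (by omega : 0 ≤ x.2)]
    exact_mod_cast h
  rw [div_le_div_iff₀ (by positivity) (by positivity)]
  calc _ ≤ 2 * x.2 * N.centralBinom * Real.sqrt (N + 1) := by gcongr
    _ ≤ 2 * x.2 * 4 ^ N := by
      rw [mul_assoc]
      gcongr
      exact centralBinom_mul_sqrt_le N

lemma hitProbBefore_le_nine_mul_sqrt (x : ℤ × ℤ) (A B : Set (ℤ × ℤ)) {r ℓ : ℕ} (hr : 1 ≤ r)
    (hrℓ : 6 * r ≤ ℓ) (hA : ∀ v ∈ A, (ℓ : ℤ) - 2 * r ≤ |v.1 - x.1|) (hx₁ : 1 ≤ x.2)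
    (hx₂ : x.2 ≤ 3 * r)
    (hB : ∀ K (s : Fin K → Fin 4) i, (∀ i' ≤ i, walkPos x s i' ∉ B) → 1 ≤ (walkPos x s i).2) :
    hitProbBefore x A B ≤ 9 * Real.sqrt (r / ℓ) := by
  set D := ℓ - 2 * r
  set N := r * D
  have hD : (D : ℝ) = ℓ - 2 * r := by rw [Nat.cast_sub (by omega)]; push_cast; ring
  have hr' : (1 : ℝ) ≤ r := by exact_mod_cast hr
  have hrℓ' : 6 * (r : ℝ) ≤ ℓ := by exact_mod_cast hrℓ
  have hx₂' : (x.2 : ℝ) ≤ 3 * r := by exact_mod_cast hx₂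
  have hreach : (N : ℝ) / (2 * D ^ 2) ≤ Real.sqrt (r / ℓ) := by
    have hD0 : (0 : ℝ) < D := by rw [hD]; linarith
    calc (N : ℝ) / (2 * D ^ 2) ≤ r / ℓ := by
          rw [div_le_div_iff₀ (by positivity) (by linarith)]
          push_cast [N]
          rw [hD]
          nlinarith [mul_nonneg (mul_nonneg (by linarith : (0 : ℝ) ≤ r) hD0.le)
            (by linarith : (0 : ℝ) ≤ ℓ - 4 * r)]
      _ ≤ Real.sqrt (r / ℓ) :=
          Real.le_sqrt_self_iff.mpr <| (div_le_one (by linarith)).mpr (by linarith)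
  have hstay : 2 * x.2 / Real.sqrt (N + 1) ≤ 8 * Real.sqrt (r / ℓ) := by
    have hNℓ : 36 * r * ℓ ≤ 64 * ((N : ℝ) + 1) := by push_cast [N]; rw [hD]; nlinarith
    rw [div_le_iff₀ (by positivity), mul_assoc, ← Real.sqrt_mul (by positivity)]
    have : 6 * r / 8 ≤ Real.sqrt (r / ℓ * (N + 1)) := by
      refine Real.le_sqrt_of_sq_le ?_
      rw [div_mul_eq_mul_div, le_div_iff₀ (by linarith)]
      nlinarith
    linarith
  calc hitProbBefore x A B
      ≤ ((Finset.univ.filter fun s : Fin N → Fin 4 =>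
            ∃ i ≤ N, (D : ℤ) ≤ |(walkPos 0 s i).1|).card +
          (Finset.univ.filter fun s : Fin N → Fin 4 => ∀ i ≤ N, 1 ≤ (walkPos x s i).2).card : ℝ) /
          4 ^ N :=
        hitProbBefore_le_card_reach_add_card_stay x A B D N
          (fun v hv => by have := hA v hv; push_cast [D]; omega) hB
    _ ≤ N / (2 * D ^ 2) + 2 * x.2 / Real.sqrt (N + 1) := by
        rw [add_div]
        exact add_le_add (card_reach_div_le N (by omega)) (card_stays_positive_div_le N hx₁)
    _ ≤ 9 * Real.sqrt (r / ℓ) := by linarith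

lemma abs_sub_le_of_mem_ballSet {o v : ℤ × ℤ} {r : ℕ} (hv : v ∈ ballSet o r) :
    |v.1 - o.1| ≤ r ∧ |v.2 - o.2| ≤ r := by
  have hv' : (v.1 - o.1) ^ 2 + (v.2 - o.2) ^ 2 ≤ (r : ℤ) ^ 2 := hv
  exact ⟨abs_le_of_sq_le_sq (by nlinarith [sq_nonneg (v.2 - o.2)]) (by positivity),
    abs_le_of_sq_le_sq (by nlinarith [sq_nonneg (v.1 - o.1)]) (by positivity)⟩

lemma mem_boxF {n : ℕ} {v : ℤ × ℤ} :
    v ∈ boxF n ↔ 0 ≤ v.1 ∧ v.1 ≤ n ∧ 0 ≤ v.2 ∧ v.2 ≤ n := by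
  simp only [boxF, Finset.mem_Icc, Prod.le_def]
  tauto

lemma one_le_snd_walkPos_of_forall_notMem_bdry_boxF {n : ℕ} {x : ℤ × ℤ} (hx : x ∈ boxF n) {K : ℕ}
    (s : Fin K → Fin 4) (i : ℕ) (h : ∀ i' ≤ i, walkPos x s i' ∉ bdry ↑(boxF n)) :
    1 ≤ (walkPos x s i).2 := by
  have hmem := walkPos_mem_of_forall_notMem_bdry x s (Finset.mem_coe.mpr hx)
    fun i' hi' => h i' hi'.le
  have hbelow := add_stepDir_mem_of_notMem_bdry hmem (h i le_rfl) 3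
  simp only [Finset.mem_coe, mem_boxF, stepDir, Matrix.cons_val, Prod.fst_add, Prod.snd_add]
    at hbelow
  omega

/-- **Hitting a well-separated ball before the boundary is unlikely:** there is an
absolute constant `C > 0` so that for `1 ≤ r`, `6r ≤ ℓ`, `2ℓ ≤ n`, balls `𝒞_i` of
radius `r` centered at `o_i = (iℓ, 2r)` for `1 ≤ i ≤ ⌊n/(2ℓ)⌋`, any `i ≠ j` and any
`x ∈ 𝒞_i`, the walk started at `x` satisfies `P_x(τ_{∂𝒞_j} < τ_{∂A_n}) ≤ C √(r/ℓ)`. -/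
theorem hitting_far_ball_before_boundary :
    ∃ C > (0 : ℝ), ∀ n r ℓ : ℕ, 1 ≤ n → 1 ≤ r → 6 * r ≤ ℓ → 2 * ℓ ≤ n →
      ∀ i j : ℕ, 1 ≤ i → i ≤ n / (2 * ℓ) → 1 ≤ j → j ≤ n / (2 * ℓ) → i ≠ j →
        ∀ x ∈ ballSet ((i * ℓ : ℤ), (2 * r : ℤ)) r,
          hitProbBefore x (bdry (ballSet ((j * ℓ : ℤ), (2 * r : ℤ)) r)) (bdry ↑(boxF n))
            ≤ C * Real.sqrt ((r : ℝ) / (ℓ : ℝ)) := by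
  refine ⟨9, by norm_num, fun n r ℓ _ hr hrℓ _ i j hi hin _ _ hij x hx => ?_⟩
  have hiℓ : (ℓ : ℤ) ≤ i * ℓ := le_mul_of_one_le_left (by positivity) (by exact_mod_cast hi)
  have hin' : 2 * ((i : ℤ) * ℓ) ≤ n := by
    have : ((i * (2 * ℓ) : ℕ) : ℤ) ≤ n := by
      exact_mod_cast (Nat.le_div_iff_mul_le (by omega)).mp hin
    push_cast at this
    linarith
  have hsep : (ℓ : ℤ) ≤ |(j : ℤ) * ℓ - i * ℓ| := by
    rw [← sub_mul, abs_mul, abs_of_nonneg (by positivity : (0 : ℤ) ≤ ℓ)]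
    exact le_mul_of_one_le_left (by positivity)
      (Int.one_le_abs (sub_ne_zero.mpr (by exact_mod_cast hij.symm)))
  obtain ⟨hx₁, hx₂⟩ := abs_sub_le_of_mem_ballSet hx
  rw [abs_le] at hx₁ hx₂
  have hxbox : x ∈ boxF n := mem_boxF.mpr (by omega)
  refine hitProbBefore_le_nine_mul_sqrt x _ _ hr hrℓ (fun v hv => ?_) (by omega) (by omega)
    fun _ => one_le_snd_walkPos_of_forall_notMem_bdry_boxF hxbox
  have hv₁ := abs_le.mp (abs_sub_le_of_mem_ballSet hv.1).1
  rcases le_abs'.mp hsep with h | h <;> [apply le_abs.mpr; apply le_abs.mpr] <;> omega
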